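/- arXiv:math/0109012 — 5 statements merged into one kernel-verified Lean document; each statement's English description precedes it below -/
import Mathlib

section
/- Let c, a > 0 with |c − a| < 1. In the upper half-plane H², let γ₁ be the geodesic with endpoints ±1 on the real axis and γ₂ the geodesic with endpoints c ± a. If γ₁ and γ₂ are disjoint, then cosh d(γ₁, γ₂) = (1 + a² − c²)/(2a). -/
set_option maxHeartbeats 1000000

open Real

/-- The (hyperbolic) distance between two subsets of the upper half-plane:
the infimum of hyperbolic distances between their points. -/
noncomputable def geodesicSetDist (S T : Set UpperHalfPlane) : ℝ :=
  sInf {d : ℝ | ∃ p ∈ S, ∃ q ∈ T, d = dist p q}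

private lemma dist_sq_eq (z w : ℂ) :
    dist z w ^ 2 = (z.re - w.re) ^ 2 + (z.im - w.im) ^ 2 := by
  rw [Complex.dist_eq_re_im]
  exact Real.sq_sqrt (by positivity)

private lemma key_ineq (c a x y s w : ℝ) (hc : 0 < c) (ha : 0 < a) (h1 : c + a ≤ 1)
    (hy : 0 < y) (hw : 0 < w) (e1 : x ^ 2 + y ^ 2 = 1) (e2 : s ^ 2 + w ^ 2 = a ^ 2) :
    ((1 - a) ^ 2 - c ^ 2) * (y * w) ≤ a * ((x - (c + s)) ^ 2 + (y - w) ^ 2) := by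
  have hc1 : c < 1 := by linarith
  have hB : 0 < 1 + a ^ 2 - c ^ 2 := by nlinarith
  have hMeq : a * (1 + c ^ 2 + a ^ 2 + 2 * c * s) + 2 * a * x * (c + s)
      + (1 + a ^ 2 - c ^ 2) * (y * w)
      = a * ((x + (c + s)) ^ 2 + y ^ 2 + w ^ 2) + (1 + a ^ 2 - c ^ 2) * (y * w) := by
    linear_combination (-a) * e1 + (-a) * e2
  have h4 : 0 < (x + (c + s)) ^ 2 + y ^ 2 + w ^ 2 := by
    nlinarith [sq_nonneg (x + (c + s)), sq_nonneg w, mul_pos hy hy]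
  have hM : 0 < a * (1 + c ^ 2 + a ^ 2 + 2 * c * s) + 2 * a * x * (c + s)
      + (1 + a ^ 2 - c ^ 2) * (y * w) := by
    have h5 := mul_pos ha h4
    have h6 := mul_pos hB (mul_pos hy hw)
    linarith [hMeq]
  have hGM : (a * ((x - (c + s)) ^ 2 + (y - w) ^ 2) - ((1 - a) ^ 2 - c ^ 2) * (y * w))
      * (a * (1 + c ^ 2 + a ^ 2 + 2 * c * s) + 2 * a * x * (c + s)
        + (1 + a ^ 2 - c ^ 2) * (y * w))
      = (2 * a ^ 2 * c - s * (1 - c ^ 2 - a ^ 2)) ^ 2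
        + ((1 + a ^ 2 - c ^ 2) * w * x - 2 * a * (c + s) * y) ^ 2 := by
    linear_combination (a^2 - 3*a^2*c^2 + a^4 - w^2 + 2*w^2*c^2 - w^2*c^4 - 2*w^2*a^2
      + 2*w^2*a^2*c^2 - w^2*a^4 - 6*s*a^2*c - 4*s^2*a^2 + y*w*a - y*w*a*c^2 + y*w*a^3
      + 2*x*a^2*c + 2*x*s*a^2) * e1
      + (-1 + 2*c^2 - c^4 - a^2 + 3*a^2*c^2 + 2*s*a^2*c + y*w*a - y*w*a*c^2 + y*w*a^3
      + 2*x*a^2*c + 2*x*s*a^2) * e2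
  by_contra hcon
  push_neg at hcon
  have h7 : (a * ((x - (c + s)) ^ 2 + (y - w) ^ 2) - ((1 - a) ^ 2 - c ^ 2) * (y * w))
      * (a * (1 + c ^ 2 + a ^ 2 + 2 * c * s) + 2 * a * x * (c + s)
        + (1 + a ^ 2 - c ^ 2) * (y * w)) < 0 :=
    mul_neg_of_neg_of_pos (by linarith) hM
  nlinarith [sq_nonneg (2 * a ^ 2 * c - s * (1 - c ^ 2 - a ^ 2)),
    sq_nonneg ((1 + a ^ 2 - c ^ 2) * w * x - 2 * a * (c + s) * y)]

/-- Let `c, a > 0` with `|c − a| < 1`.  In the upper half-plane let `γ₁` be the geodesic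
with endpoints `±1` (the semicircle `|z| = 1`) and `γ₂` the geodesic with endpoints
`c ± a` (the semicircle `|z − c| = a`).  If `γ₁` and `γ₂` are disjoint then
`cosh d(γ₁, γ₂) = (1 + a² − c²)/(2a)`. -/
theorem cosh_dist_disjoint_geodesics (c a : ℝ) (hc : 0 < c) (ha : 0 < a)
    (hca : |c - a| < 1)
    (γ₁ γ₂ : Set UpperHalfPlane)
    (hγ₁ : γ₁ = {z : UpperHalfPlane | ‖(z : ℂ)‖ = 1})
    (hγ₂ : γ₂ = {z : UpperHalfPlane | ‖(z : ℂ) - c‖ = a})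
    (hdisj : Disjoint γ₁ γ₂) :
    Real.cosh (geodesicSetDist γ₁ γ₂) = (1 + a ^ 2 - c ^ 2) / (2 * a) := by
  obtain ⟨hca1, hca2⟩ := abs_lt.mp hca
  subst hγ₁ hγ₂
  -- Step 1: disjointness forces `c + a ≤ 1`.
  have hle : c + a ≤ 1 := by
    by_contra hgt
    push_neg at hgt
    obtain ⟨x0, hx0⟩ : ∃ x0 : ℝ, 2 * c * x0 = 1 + c ^ 2 - a ^ 2 :=
      ⟨(1 + c ^ 2 - a ^ 2) / (2 * c), by field_simp⟩
    have hx0sq : (2 * c * x0) ^ 2 = (1 + c ^ 2 - a ^ 2) ^ 2 := by rw [hx0]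
    have hprod : 0 < (a + c - 1) * ((a + 1 - c) * ((1 + c - a) * (1 + c + a))) := by
      apply mul_pos (by linarith)
      apply mul_pos (by linarith)
      exact mul_pos (by linarith) (by linarith)
    have hy0 : 0 < 1 - x0 ^ 2 := by nlinarith [mul_pos hc hc]
    set y0 : ℝ := Real.sqrt (1 - x0 ^ 2) with hy0def
    have hy0pos : 0 < y0 := Real.sqrt_pos.2 hy0
    have hy0sq : y0 ^ 2 = 1 - x0 ^ 2 := Real.sq_sqrt hy0.le
    set z0 : UpperHalfPlane := ⟨⟨x0, y0⟩, hy0pos⟩ with hz0def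
    have hz1 : z0 ∈ {z : UpperHalfPlane | ‖(z : ℂ)‖ = 1} := by
      show ‖(⟨x0, y0⟩ : ℂ)‖ = 1
      rw [Complex.norm_def, Complex.normSq_mk,
        show x0 * x0 + y0 * y0 = 1 by linear_combination hy0sq, Real.sqrt_one]
    have hz2 : z0 ∈ {z : UpperHalfPlane | ‖(z : ℂ) - c‖ = a} := by
      show ‖(⟨x0, y0⟩ : ℂ) - (c : ℂ)‖ = a
      rw [Complex.norm_def, Complex.normSq_apply]
      simp only [Complex.sub_re, Complex.sub_im, Complex.ofReal_re, Complex.ofReal_im]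
      rw [show ((⟨x0, y0⟩ : ℂ).re - c) * ((⟨x0, y0⟩ : ℂ).re - c)
          + ((⟨x0, y0⟩ : ℂ).im - 0) * ((⟨x0, y0⟩ : ℂ).im - 0) = a ^ 2 by
        show (x0 - c) * (x0 - c) + (y0 - 0) * (y0 - 0) = a ^ 2
        linear_combination hy0sq - hx0]
      exact Real.sqrt_sq ha.le
    exact absurd hz2 (Set.disjoint_left.mp hdisj hz1)
  -- Step 2: uniform lower bound for the cosh of distances.
  have hlow : ∀ p ∈ {z : UpperHalfPlane | ‖(z : ℂ)‖ = 1},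
      ∀ q ∈ {z : UpperHalfPlane | ‖(z : ℂ) - c‖ = a},
      (1 + a ^ 2 - c ^ 2) / (2 * a) ≤ Real.cosh (dist p q) := by
    intro p hp q hq
    have hpim : 0 < p.im := p.im_pos
    have hqim : 0 < q.im := q.im_pos
    have e1 : (p : ℂ).re ^ 2 + (p : ℂ).im ^ 2 = 1 := by
      have h2 : Complex.normSq (p : ℂ) = 1 := by
        rw [← Complex.sq_norm, Set.mem_setOf_eq.mp hp]; norm_num
      rw [Complex.normSq_apply] at h2
      linear_combination h2
    have e2 : ((q : ℂ).re - c) ^ 2 + (q : ℂ).im ^ 2 = a ^ 2 := by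
      have h2 : Complex.normSq ((q : ℂ) - c) = a ^ 2 := by
        rw [← Complex.sq_norm, Set.mem_setOf_eq.mp hq]
      rw [Complex.normSq_apply] at h2
      simp only [Complex.sub_re, Complex.sub_im, Complex.ofReal_re, Complex.ofReal_im] at h2
      linear_combination h2
    have key := key_ineq c a (p : ℂ).re (p : ℂ).im ((q : ℂ).re - c) (q : ℂ).im
      hc ha hle (by rwa [UpperHalfPlane.coe_im]) (by rwa [UpperHalfPlane.coe_im]) e1 e2
    rw [UpperHalfPlane.cosh_dist, dist_sq_eq]
    rw [show (1 + a ^ 2 - c ^ 2) / (2 * a) = 1 + ((1 - a) ^ 2 - c ^ 2) / (2 * a) by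
      field_simp; ring]
    have him : 2 * p.im * q.im = 2 * (p : ℂ).im * (q : ℂ).im := by
      rw [UpperHalfPlane.coe_im, UpperHalfPlane.coe_im]
    rw [him, add_le_add_iff_left, div_le_div_iff₀ (by positivity) (by positivity)]
    nlinarith [key]
  unfold geodesicSetDist
  set D : Set ℝ := {d : ℝ | ∃ p ∈ {z : UpperHalfPlane | ‖(z : ℂ)‖ = 1},
      ∃ q ∈ {z : UpperHalfPlane | ‖(z : ℂ) - c‖ = a}, d = dist p q} with hDdef
  have hbdd : BddBelow D := by
    refine ⟨0, ?_⟩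
    rintro d ⟨p', hp', q', hq', rfl⟩
    exact dist_nonneg
  rcases lt_or_eq_of_le hle with hlt | heq
  · -- Strictly nested case: the infimum is attained on the common perpendicular.
    obtain ⟨m, hm⟩ : ∃ m : ℝ, 2 * c * m = 1 + c ^ 2 - a ^ 2 :=
      ⟨(1 + c ^ 2 - a ^ 2) / (2 * c), by field_simp⟩
    have hm1 : 1 < m := by
      nlinarith [mul_pos (show (0:ℝ) < 1 - c - a by linarith)
        (show (0:ℝ) < 1 - c + a by linarith)]
    have hmc : a < m - c := by
      nlinarith [mul_pos (show (0:ℝ) < 1 - c - a by linarith)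
        (show (0:ℝ) < 1 + c + a by linarith)]
    have hm0 : 0 < m := by linarith
    have hmc0 : 0 < m - c := by linarith
    have hmsq : 0 < m ^ 2 - 1 := by nlinarith
    obtain ⟨u, hu0, husq⟩ : ∃ u : ℝ, 0 < u ∧ u ^ 2 = m ^ 2 - 1 :=
      ⟨Real.sqrt (m ^ 2 - 1), Real.sqrt_pos.2 hmsq, Real.sq_sqrt hmsq.le⟩
    set p : UpperHalfPlane := ⟨⟨1 / m, u / m⟩, show (0:ℝ) < u / m from div_pos hu0 hm0⟩
      with hpdef
    set q : UpperHalfPlane := ⟨⟨c + a ^ 2 / (m - c), a * u / (m - c)⟩,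
      show (0:ℝ) < a * u / (m - c) from div_pos (mul_pos ha hu0) hmc0⟩ with hqdef
    have hp : p ∈ {z : UpperHalfPlane | ‖(z : ℂ)‖ = 1} := by
      show ‖(⟨1 / m, u / m⟩ : ℂ)‖ = 1
      rw [Complex.norm_def, Complex.normSq_mk,
        show (1 / m) * (1 / m) + (u / m) * (u / m) = 1 by
          field_simp
          linear_combination husq,
        Real.sqrt_one]
    have hq : q ∈ {z : UpperHalfPlane | ‖(z : ℂ) - c‖ = a} := by
      show ‖(⟨c + a ^ 2 / (m - c), a * u / (m - c)⟩ : ℂ) - (c : ℂ)‖ = a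
      rw [Complex.norm_def, Complex.normSq_apply]
      simp only [Complex.sub_re, Complex.sub_im, Complex.ofReal_re, Complex.ofReal_im]
      rw [show ((⟨c + a ^ 2 / (m - c), a * u / (m - c)⟩ : ℂ).re - c)
            * ((⟨c + a ^ 2 / (m - c), a * u / (m - c)⟩ : ℂ).re - c)
          + ((⟨c + a ^ 2 / (m - c), a * u / (m - c)⟩ : ℂ).im - 0)
            * ((⟨c + a ^ 2 / (m - c), a * u / (m - c)⟩ : ℂ).im - 0) = a ^ 2 by
        show (c + a ^ 2 / (m - c) - c) * (c + a ^ 2 / (m - c) - c)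
          + (a * u / (m - c) - 0) * (a * u / (m - c) - 0) = a ^ 2
        field_simp
        linear_combination a ^ 2 * husq + a ^ 2 * hm]
      exact Real.sqrt_sq ha.le
    have hcosh : Real.cosh (dist p q) = (1 + a ^ 2 - c ^ 2) / (2 * a) := by
      rw [UpperHalfPlane.cosh_dist, dist_sq_eq]
      have hre1 : (p : ℂ).re = 1 / m := rfl
      have him1 : (p : ℂ).im = u / m := rfl
      have hre2 : (q : ℂ).re = c + a ^ 2 / (m - c) := rfl
      have him2 : (q : ℂ).im = a * u / (m - c) := rfl
      have hpim : p.im = u / m := rfl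
      have hqim : q.im = a * u / (m - c) := rfl
      rw [hre1, him1, hre2, him2, hpim, hqim]
      have e1 : (1 / m - (c + a ^ 2 / (m - c))) * (m * (m - c))
          = (m - c) * (1 - m * c) - m * a ^ 2 := by field_simp; ring
      have e2 : (u / m - a * u / (m - c)) * (m * (m - c)) = u * (m - c - a * m) := by
        field_simp
      have H : ((m - c) * (1 - m * c) - m * a ^ 2) ^ 2 + (u * (m - c - a * m)) ^ 2
          = ((1 - a) ^ 2 - c ^ 2) * u ^ 2 * (m * (m - c)) := by
        linear_combination (-(c*m) + c*a^2*m + c^2 + c^2*m^2 - c^3*m) * husq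
          + (-(m^2) + a^2*m^2 + c*m + c*m^3 - c^2*m^2) * hm
      have hB : (1 / m - (c + a ^ 2 / (m - c))) ^ 2 + (u / m - a * u / (m - c)) ^ 2
          = ((1 - a) ^ 2 - c ^ 2) * u ^ 2 / (m * (m - c)) := by
        rw [eq_div_iff (by positivity)]
        refine mul_right_cancel₀ (show m * (m - c) ≠ 0 by positivity) ?_
        calc (((1 / m - (c + a ^ 2 / (m - c))) ^ 2 + (u / m - a * u / (m - c)) ^ 2)
              * (m * (m - c))) * (m * (m - c))
            = ((1 / m - (c + a ^ 2 / (m - c))) * (m * (m - c))) ^ 2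
              + ((u / m - a * u / (m - c)) * (m * (m - c))) ^ 2 := by ring
          _ = ((m - c) * (1 - m * c) - m * a ^ 2) ^ 2 + (u * (m - c - a * m)) ^ 2 := by
              rw [e1, e2]
          _ = ((1 - a) ^ 2 - c ^ 2) * u ^ 2 * (m * (m - c)) := H
      rw [hB]
      have hu' : u ≠ 0 := ne_of_gt hu0
      have hm' : m ≠ 0 := ne_of_gt hm0
      have hmc' : m - c ≠ 0 := ne_of_gt hmc0
      have ha' : a ≠ 0 := ne_of_gt ha
      field_simp
      ring
    have hmemD : dist p q ∈ D := ⟨p, hp, q, hq, rfl⟩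
    have hlb : ∀ d ∈ D, dist p q ≤ d := by
      rintro d ⟨p', hp', q', hq', rfl⟩
      have h := hlow p' hp' q' hq'
      rw [← hcosh] at h
      have h2 := Real.cosh_le_cosh.mp h
      rwa [abs_of_nonneg dist_nonneg, abs_of_nonneg dist_nonneg] at h2
    rw [IsLeast.csInf_eq ⟨hmemD, hlb⟩]
    exact hcosh
  · -- Tangent case: the two geodesics are asymptotic and the infimum is `0`.
    have ha1 : a < 1 := by linarith
    have hKone : (1 + a ^ 2 - c ^ 2) / (2 * a) = 1 := by
      rw [div_eq_one_iff_eq (by positivity)]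
      linear_combination (a - c - 1) * heq
    have hsmall : ∀ ε : ℝ, 0 < ε → ∃ d ∈ D, d ≤ ε := by
      intro ε hε
      set y1 : ℝ := min (a / 2) (min (1 / 2) (ε * a / (a + 1))) with hy1def
      have hy1pos : 0 < y1 :=
        lt_min (by positivity) (lt_min (by norm_num) (by positivity))
      have hy1a : y1 ≤ a / 2 := min_le_left _ _
      have hy1h : y1 ≤ 1 / 2 := (min_le_right _ _).trans (min_le_left _ _)
      have hy1e : y1 ≤ ε * a / (a + 1) := (min_le_right _ _).trans (min_le_right _ _)
      have h1y : 0 ≤ 1 - y1 ^ 2 := by nlinarith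
      have hay : 0 ≤ a ^ 2 - y1 ^ 2 := by nlinarith
      set xp : ℝ := Real.sqrt (1 - y1 ^ 2) with hxpdef
      set xq : ℝ := Real.sqrt (a ^ 2 - y1 ^ 2) with hxqdef
      have hxpsq : xp ^ 2 = 1 - y1 ^ 2 := Real.sq_sqrt h1y
      have hxqsq : xq ^ 2 = a ^ 2 - y1 ^ 2 := Real.sq_sqrt hay
      set p : UpperHalfPlane := ⟨⟨xp, y1⟩, hy1pos⟩ with hpdef
      set q : UpperHalfPlane := ⟨⟨c + xq, y1⟩, hy1pos⟩ with hqdef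
      have hp : p ∈ {z : UpperHalfPlane | ‖(z : ℂ)‖ = 1} := by
        show ‖(⟨xp, y1⟩ : ℂ)‖ = 1
        rw [Complex.norm_def, Complex.normSq_mk,
          show xp * xp + y1 * y1 = 1 by linear_combination hxpsq, Real.sqrt_one]
      have hq : q ∈ {z : UpperHalfPlane | ‖(z : ℂ) - c‖ = a} := by
        show ‖(⟨c + xq, y1⟩ : ℂ) - (c : ℂ)‖ = a
        rw [Complex.norm_def, Complex.normSq_apply]
        simp only [Complex.sub_re, Complex.sub_im, Complex.ofReal_re, Complex.ofReal_im]
        rw [show ((⟨c + xq, y1⟩ : ℂ).re - c) * ((⟨c + xq, y1⟩ : ℂ).re - c)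
            + ((⟨c + xq, y1⟩ : ℂ).im - 0) * ((⟨c + xq, y1⟩ : ℂ).im - 0) = a ^ 2 by
          show (c + xq - c) * (c + xq - c) + (y1 - 0) * (y1 - 0) = a ^ 2
          linear_combination hxqsq]
        exact Real.sqrt_sq ha.le
      have hxp_le : xp ≤ 1 := by
        have h := Real.sqrt_le_sqrt (show 1 - y1 ^ 2 ≤ 1 by nlinarith)
        rwa [Real.sqrt_one] at h
      have hxp_ge : 1 - y1 ^ 2 ≤ xp := by
        apply Real.le_sqrt_of_sq_le
        nlinarith
      have hxq_le : xq ≤ a := by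
        have h := Real.sqrt_le_sqrt (show a ^ 2 - y1 ^ 2 ≤ a ^ 2 by nlinarith)
        rwa [Real.sqrt_sq ha.le] at h
      have hxq_ge : a - y1 ^ 2 / a ≤ xq := by
        apply Real.le_sqrt_of_sq_le
        have ht : y1 ^ 2 / a ≤ y1 / 2 := by
          rw [div_le_iff₀ ha]
          nlinarith
        have ht0 : 0 ≤ y1 ^ 2 / a := by positivity
        have hta : a * (y1 ^ 2 / a) = y1 ^ 2 := by field_simp
        nlinarith [hta, mul_self_le_mul_self ht0 ht, hy1pos, mul_pos hy1pos hy1pos]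
      have gup : xp - (c + xq) ≤ y1 ^ 2 / a := by
        linarith [hxp_le, hxq_ge]
      have glow : -(y1 ^ 2) ≤ xp - (c + xq) := by linarith [hxp_ge, hxq_le]
      have gup' : (xp - (c + xq)) * a ≤ y1 ^ 2 := (le_div_iff₀ ha).mp gup
      have hg2 : a ^ 2 * (xp - (c + xq)) ^ 2 ≤ y1 ^ 4 * (a ^ 2 + 1) := by
        have hint1 : (0:ℝ) ≤ y1 ^ 2 - a * (xp - (c + xq)) := by nlinarith [gup']
        have hint2 : (0:ℝ) ≤ a * (xp - (c + xq)) + a * y1 ^ 2 := by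
          nlinarith [mul_nonneg ha.le (show (0:ℝ) ≤ xp - (c + xq) + y1 ^ 2 by linarith)]
        have hint3 : (0:ℝ) ≤ y1 ^ 2 - a * y1 ^ 2 := by nlinarith [sq_nonneg y1]
        nlinarith [mul_nonneg hint1 hint2, mul_nonneg hint1 hint3, sq_nonneg (a * y1 ^ 2),
          sq_nonneg (y1 ^ 2)]
      have hI : y1 ^ 2 * (a ^ 2 + 1) ≤ ε ^ 2 * a ^ 2 := by
        have h7 : y1 ^ 2 ≤ (ε * a / (a + 1)) ^ 2 := by
          have := pow_le_pow_left₀ hy1pos.le hy1e 2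
          exact this
        have h8 : (ε * a / (a + 1)) ^ 2 * (a + 1) ^ 2 = (ε * a) ^ 2 := by
          field_simp
        nlinarith [sq_nonneg (y1 * a), mul_pos hy1pos hy1pos]
      have hcosheps : 1 + ε ^ 2 / 2 ≤ Real.cosh ε := by
        have hsh : ε / 2 ≤ Real.sinh (ε / 2) := Real.self_le_sinh_iff.mpr (by linarith)
        have hch : Real.cosh ε = 1 + 2 * Real.sinh (ε / 2) ^ 2 := by
          nth_rewrite 1 [show ε = 2 * (ε / 2) by ring]
          rw [Real.cosh_two_mul, Real.cosh_sq']
          ring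
        nlinarith [hsh]
      have hcosh_le : Real.cosh (dist p q) ≤ Real.cosh ε := by
        rw [UpperHalfPlane.cosh_dist, dist_sq_eq]
        have hre1 : (p : ℂ).re = xp := rfl
        have him1 : (p : ℂ).im = y1 := rfl
        have hre2 : (q : ℂ).re = c + xq := rfl
        have him2 : (q : ℂ).im = y1 := rfl
        have hpim : p.im = y1 := rfl
        have hqim : q.im = y1 := rfl
        simp only [hre1, him1, hre2, him2, hpim, hqim]
        have hquot : ((xp - (c + xq)) ^ 2 + (y1 - y1) ^ 2) / (2 * y1 * y1)
            ≤ ε ^ 2 / 2 := by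
          rw [div_le_div_iff₀ (by positivity) (by norm_num)]
          nlinarith [hg2, mul_le_mul_of_nonneg_right hI (sq_nonneg y1), mul_pos ha ha,
            sq_nonneg (xp - (c + xq))]
        linarith [hquot, hcosheps]
      have hd : dist p q ≤ ε := by
        have h2 := Real.cosh_le_cosh.mp hcosh_le
        rwa [abs_of_nonneg dist_nonneg, abs_of_nonneg hε.le] at h2
      exact ⟨dist p q, ⟨p, hp, q, hq, rfl⟩, hd⟩
    have hInf : sInf D = 0 := by
      apply le_antisymm
      · by_contra hcon
        push_neg at hcon
        obtain ⟨d, hd, hdle⟩ := hsmall (sInf D / 2) (by linarith)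
        have h9 := csInf_le hbdd hd
        linarith
      · obtain ⟨d0, hd0, -⟩ := hsmall 1 one_pos
        apply le_csInf ⟨d0, hd0⟩
        rintro d ⟨p', hp', q', hq', rfl⟩
        exact dist_nonneg
    rw [hInf, Real.cosh_zero]
    exact hKone.symm
end

section
/- In the hyperboloid model of H³, let O be a horosphere dual to u ∈ L³₊ (the future light cone), meaning O = {v ∈ H³ : ⟨v,u⟩ = −1}, and let H be a totally geodesic plane with O ∩ H = ∅. Let w be the unit space-like dual vector of the half-space bounded by H containing O. Then exp d(O, H) = −⟨u, w⟩. -/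
/-! Write `c = -⟨u,w⟩`. The horosphere reaches the closed positive side of `w` unless `c > 1`:
for `c < 0` it is unbounded there, for `c = 0` it meets `H`, and for `0 < c` its point
`p = c⁻¹ w + ((1 + c⁻²)/2) u` has `⟨p,w⟩ = (c⁻¹ - c)/2`. For `c > 1`, Cauchy–Schwarz on `p^⊥`
gives `⟨p,w⟩ ≤ (c⁻¹ - c)/2` for every `p ∈ O`, and Cauchy–Schwarz on `q^⊥` gives
`⟨p,q⟩² ≥ 1 + ⟨p,w⟩²` for `q ∈ H`. Hence `cosh d(p,q) ≥ (c + c⁻¹)/2 = cosh (log c)`, with equality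
for the point `p` above and `q = c⁻¹ u + w`. -/

/-- The Lorentzian inner product on Minkowski 4-space `M^{3,1}`. -/
noncomputable def lprod (x y : Fin 4 → ℝ) : ℝ :=
  -(x 0 * y 0) + x 1 * y 1 + x 2 * y 2 + x 3 * y 3

/-- The hyperboloid model of hyperbolic 3-space. -/
def Hyp3 : Set (Fin 4 → ℝ) := {x | lprod x x = -1 ∧ 0 < x 0}

/-- The inverse hyperbolic cosine. -/
noncomputable def arcosh (x : ℝ) : ℝ := Real.log (x + Real.sqrt (x ^ 2 - 1))

/-- Hyperbolic distance in the hyperboloid model: `cosh d(u,v) = −⟨u,v⟩`. -/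
noncomputable def hypDist (u v : Fin 4 → ℝ) : ℝ := arcosh (-(lprod u v))

/-- Distance between two subsets of the hyperboloid model. -/
noncomputable def setHypDist (S T : Set (Fin 4 → ℝ)) : ℝ :=
  sInf {d : ℝ | ∃ p ∈ S, ∃ q ∈ T, d = hypDist p q}


section Minkowski

variable {p q u w x y z a b : Fin 4 → ℝ}

lemma lprod_comm (x y : Fin 4 → ℝ) : lprod x y = lprod y x := by
  simp only [lprod]; ring

@[simp] lemma lprod_add_left (x y z : Fin 4 → ℝ) : lprod (x + y) z = lprod x z + lprod y z := by
  simp only [lprod, Pi.add_apply]; ring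

@[simp] lemma lprod_add_right (x y z : Fin 4 → ℝ) : lprod x (y + z) = lprod x y + lprod x z := by
  simp only [lprod, Pi.add_apply]; ring

@[simp] lemma lprod_sub_left (x y z : Fin 4 → ℝ) : lprod (x - y) z = lprod x z - lprod y z := by
  simp only [lprod, Pi.sub_apply]; ring

@[simp] lemma lprod_sub_right (x y z : Fin 4 → ℝ) : lprod x (y - z) = lprod x y - lprod x z := by
  simp only [lprod, Pi.sub_apply]; ring

@[simp] lemma lprod_smul_left (c : ℝ) (x y : Fin 4 → ℝ) : lprod (c • x) y = c * lprod x y := by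
  simp only [lprod, Pi.smul_apply, smul_eq_mul]; ring

@[simp] lemma lprod_smul_right (c : ℝ) (x y : Fin 4 → ℝ) : lprod x (c • y) = c * lprod x y := by
  simp only [lprod, Pi.smul_apply, smul_eq_mul]; ring

lemma lprod_self_nonneg_of_lprod_eq_zero (hp : lprod p p < 0) (hz : lprod z p = 0) :
    0 ≤ lprod z z := by
  simp only [lprod] at *
  have h : z 0 * p 0 = z 1 * p 1 + z 2 * p 2 + z 3 * p 3 := by linarith
  have h2 : z 0 ^ 2 * p 0 ^ 2 = (z 1 * p 1 + z 2 * p 2 + z 3 * p 3) ^ 2 := by rw [← h]; ring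
  nlinarith [sq_nonneg (z 1 * p 2 - z 2 * p 1), sq_nonneg (z 1 * p 3 - z 3 * p 1),
    sq_nonneg (z 2 * p 3 - z 3 * p 2), sq_nonneg (z 1), sq_nonneg (z 2), sq_nonneg (z 3),
    sq_nonneg (p 0)]

lemma sq_lprod_le_of_lprod_eq_zero (hp : lprod p p < 0) (ha : lprod a p = 0)
    (hb : lprod b p = 0) : lprod a b ^ 2 ≤ lprod a a * lprod b b := by
  have hquad : ∀ t : ℝ, 0 ≤ lprod b b * (t * t) + 2 * lprod a b * t + lprod a a := fun t => by
    have := lprod_self_nonneg_of_lprod_eq_zero (z := a + t • b) hp (by simp [ha, hb])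
    simp only [lprod_add_left, lprod_add_right, lprod_smul_left, lprod_smul_right,
      lprod_comm b a] at this
    linarith
  have := discrim_le_zero hquad
  rw [discrim] at this
  linarith

lemma lprod_neg_of_apply_zero_pos (hx : lprod x x ≤ 0) (hx0 : 0 < x 0) (hy : lprod y y < 0)
    (hy0 : 0 < y 0) : lprod x y < 0 := by
  simp only [lprod] at *
  set S := x 1 * y 1 + x 2 * y 2 + x 3 * y 3
  have hlagrange : S ^ 2 ≤ (x 1 ^ 2 + x 2 ^ 2 + x 3 ^ 2) * (y 1 ^ 2 + y 2 ^ 2 + y 3 ^ 2) := by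
    nlinarith [sq_nonneg (x 1 * y 2 - x 2 * y 1), sq_nonneg (x 1 * y 3 - x 3 * y 1),
      sq_nonneg (x 2 * y 3 - x 3 * y 2)]
  have hS : S ^ 2 < (x 0 * y 0) ^ 2 := by
    calc S ^ 2 ≤ x 0 ^ 2 * (y 1 ^ 2 + y 2 ^ 2 + y 3 ^ 2) := by
          nlinarith [sq_nonneg (y 1), sq_nonneg (y 2), sq_nonneg (y 3)]
      _ < x 0 ^ 2 * y 0 ^ 2 := by gcongr; nlinarith
      _ = (x 0 * y 0) ^ 2 := by ring
  linarith [(abs_lt_of_sq_lt_sq' hS (mul_pos hx0 hy0).le).2]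

lemma apply_zero_pos_of_lprod_neg (hx : lprod x x ≤ 0) (hx0 : 0 < x 0) (hy : lprod y y < 0)
    (hxy : lprod x y < 0) : 0 < y 0 := by
  have hy0 : y 0 ≠ 0 := by
    intro h0
    simp only [lprod, h0] at hy
    nlinarith [sq_nonneg (y 1), sq_nonneg (y 2), sq_nonneg (y 3)]
  refine hy0.lt_or_gt.resolve_left fun hneg => ?_
  have := lprod_neg_of_apply_zero_pos hx hx0 (y := -y) (by simpa [lprod] using hy)
    (by simpa using hneg)
  simp only [lprod, Pi.neg_apply] at this hxy
  linarith

lemma exists_lprod_eq_neg_one (hu0 : u 0 ≠ 0) : ∃ x, lprod x u = -1 :=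
  ⟨![(u 0)⁻¹, 0, 0, 0], by simp [lprod, hu0]⟩

lemma exists_lprod_eq_zero_lprod_self_pos (u : Fin 4 → ℝ) : ∃ b, lprod b u = 0 ∧ 0 < lprod b b := by
  by_cases h : u 1 = 0 ∧ u 2 = 0
  · exact ⟨![0, 1, 0, 0], by simp [lprod, h.1], by simp [lprod]⟩
  · refine ⟨![0, -u 2, u 1, 0], by simp [lprod]; ring, ?_⟩
    have : 0 < u 1 ^ 2 + u 2 ^ 2 := by
      rcases not_and_or.1 h with h | h <;> positivity
    simp [lprod]; nlinarith

end Minkowski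

lemma exists_quadratic_nonneg {a : ℝ} (b c : ℝ) (ha : 0 < a) :
    ∃ x, 0 ≤ a * (x * x) + b * x + c := by
  by_contra! h
  have hd := discrim_le_zero (a := -a) (b := -b) (c := -c) fun x => by linarith [h x]
  have h0 := h 0
  simp only [discrim, mul_zero, zero_add] at hd h0
  nlinarith

def horosphere (u : Fin 4 → ℝ) : Set (Fin 4 → ℝ) := {v ∈ Hyp3 | lprod v u = -1}

def hypPlane (w : Fin 4 → ℝ) : Set (Fin 4 → ℝ) := {v ∈ Hyp3 | lprod v w = 0}

/-- For `⟨x,u⟩ = -1`, the point where the null line `x + ℝ u` meets the horosphere dual to `u`. -/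
noncomputable def horoProj (u x : Fin 4 → ℝ) : Fin 4 → ℝ := x + ((1 + lprod x x) / 2) • u

section Horosphere

variable {p q u w x : Fin 4 → ℝ}

lemma horoProj_mem_horosphere (hu : lprod u u = 0) (hu0 : 0 < u 0) (hx : lprod x u = -1) :
    horoProj u x ∈ horosphere u := by
  have hvv : lprod (horoProj u x) (horoProj u x) = -1 := by
    simp only [horoProj, lprod_add_left, lprod_add_right, lprod_smul_left, lprod_smul_right,
      lprod_comm u x, hx, hu]
    ring
  have hvu : lprod (horoProj u x) u = -1 := by simp [horoProj, hx, hu]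
  refine ⟨⟨hvv, apply_zero_pos_of_lprod_neg hu.le hu0 (by linarith) ?_⟩, hvu⟩
  rw [lprod_comm, hvu]; norm_num

lemma lprod_horoProj (u x w : Fin 4 → ℝ) :
    lprod (horoProj u x) w = lprod x w + (1 + lprod x x) / 2 * lprod u w := by
  simp [horoProj]

lemma exists_mem_horosphere_lprod_nonneg (hu : lprod u u = 0) (hu0 : 0 < u 0)
    (hw : lprod w w = 1) (huw : 0 ≤ lprod u w) : ∃ v ∈ horosphere u, 0 ≤ lprod v w := by
  obtain ⟨x₀, hx₀⟩ := exists_lprod_eq_neg_one hu0.ne'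
  rcases huw.eq_or_lt with huw | huw
  · refine ⟨horoProj u (x₀ - lprod x₀ w • w), horoProj_mem_horosphere hu hu0 ?_, ?_⟩
    · simp [hx₀, lprod_comm w u, ← huw]
    · rw [lprod_horoProj, ← huw]; simp [hw]
  · obtain ⟨b, hbu, hbb⟩ := exists_lprod_eq_zero_lprod_self_pos u
    -- `⟨horoProj u (x₀ + t • b), w⟩` is a quadratic in `t` with leading coefficient `⟨u,w⟩⟨b,b⟩/2`
    have hlead : 0 < lprod u w * lprod b b / 2 := by positivity
    obtain ⟨t, ht⟩ := exists_quadratic_nonneg (lprod b w + lprod u w * lprod x₀ b)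
      (lprod x₀ w + (1 + lprod x₀ x₀) / 2 * lprod u w) hlead
    refine ⟨horoProj u (x₀ + t • b), horoProj_mem_horosphere hu hu0 (by simp [hx₀, hbu]), ?_⟩
    rw [lprod_horoProj]
    simp only [lprod_add_left, lprod_add_right, lprod_smul_left, lprod_smul_right, lprod_comm b x₀]
    linarith

lemma horoProj_inv_smul_mem_horosphere (hu : lprod u u = 0) (hu0 : 0 < u 0) {c : ℝ}
    (hc : lprod u w = -c) (hc0 : c ≠ 0) : horoProj u (c⁻¹ • w) ∈ horosphere u :=
  horoProj_mem_horosphere hu hu0 (by rw [lprod_smul_left, lprod_comm, hc]; field_simp)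

lemma lprod_horoProj_inv_smul_self (hw : lprod w w = 1) {c : ℝ} (hc : lprod u w = -c)
    (hc0 : c ≠ 0) : lprod (horoProj u (c⁻¹ • w)) w = (c⁻¹ - c) / 2 := by
  rw [lprod_horoProj]
  simp only [lprod_smul_left, lprod_smul_right, hw, hc]
  field_simp
  ring

lemma one_lt_neg_lprod_of_forall_mem_horosphere (hu : lprod u u = 0) (hu0 : 0 < u 0)
    (hw : lprod w w = 1) (hside : ∀ v ∈ horosphere u, lprod v w < 0) : 1 < -lprod u w := by
  set c := -lprod u w
  have hc : lprod u w = -c := (neg_neg _).symm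
  have hc0 : 0 < c := by
    by_contra! h
    obtain ⟨v, hv, hvw⟩ := exists_mem_horosphere_lprod_nonneg hu hu0 hw (by linarith)
    linarith [hside v hv]
  have hneg := hside _ (horoProj_inv_smul_mem_horosphere hu hu0 hc hc0.ne')
  rw [lprod_horoProj_inv_smul_self hw hc hc0.ne'] at hneg
  by_contra! hc1
  linarith [one_le_inv₀ hc0 |>.2 hc1]

lemma sq_lprod_sub_two_mul_le_one (hu : lprod u u = 0) (hw : lprod w w = 1)
    (hp : lprod p p = -1) (hpu : lprod p u = -1) :
    lprod u w ^ 2 - 2 * lprod u w * lprod p w ≤ 1 := by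
  have hcs := sq_lprod_le_of_lprod_eq_zero (a := u - p) (b := w + lprod p w • p) (p := p)
    (by rw [hp]; norm_num) (by simp [lprod_comm u p, hpu, hp]) (by simp [lprod_comm w p, hp])
  simp only [lprod_add_left, lprod_add_right, lprod_sub_left, lprod_sub_right, lprod_smul_left,
    lprod_smul_right, lprod_comm w p, lprod_comm u p, hu, hw, hp, hpu] at hcs
  nlinarith [hcs]

lemma one_add_sq_le_sq_lprod (hw : lprod w w = 1) (hp : lprod p p = -1) (hq : lprod q q = -1)
    (hqw : lprod q w = 0) : 1 + lprod p w ^ 2 ≤ lprod p q ^ 2 := by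
  have hwq : lprod w q = 0 := by rw [lprod_comm, hqw]
  have hcs := sq_lprod_le_of_lprod_eq_zero (a := p + lprod p q • q) (b := w) (p := q)
    (by rw [hq]; norm_num) (by simp [hq]) hwq
  simp only [lprod_add_left, lprod_add_right, lprod_smul_left, lprod_smul_right, lprod_comm q p,
    hw, hp, hq, hqw] at hcs
  nlinarith [hcs]

lemma le_neg_lprod_of_mem_horosphere_of_mem_hypPlane (hu : lprod u u = 0) (hw : lprod w w = 1)
    {c : ℝ} (hc : lprod u w = -c) (hc1 : 1 < c) (hp : p ∈ horosphere u) (hq : q ∈ hypPlane w) :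
    (c + c⁻¹) / 2 ≤ -lprod p q := by
  obtain ⟨⟨hpp, hp0⟩, hpu⟩ := hp
  obtain ⟨⟨hqq, hq0⟩, hqw⟩ := hq
  have hc0 : 0 < c := by linarith
  have hm : (c - c⁻¹) / 2 ≤ -lprod p w := by
    have := sq_lprod_sub_two_mul_le_one hu hw hpp hpu
    rw [hc] at this
    have : c * ((c - c⁻¹) / 2) ≤ c * -lprod p w := by
      field_simp; nlinarith
    exact le_of_mul_le_mul_left this hc0
  have hpq : lprod p q < 0 :=
    lprod_neg_of_apply_zero_pos (by rw [hpp]; norm_num) hp0 (by rw [hqq]; norm_num) hq0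
  rw [← sq_le_sq₀ (by positivity) (by linarith)]
  have hsub : 0 ≤ (c - c⁻¹) / 2 := by
    have := inv_lt_one_of_one_lt₀ hc1; linarith
  calc ((c + c⁻¹) / 2) ^ 2 = 1 + ((c - c⁻¹) / 2) ^ 2 := by field_simp; ring
    _ ≤ 1 + lprod p w ^ 2 := by nlinarith
    _ ≤ lprod p q ^ 2 := one_add_sq_le_sq_lprod hw hpp hqq hqw
    _ = (-lprod p q) ^ 2 := by ring

lemma inv_smul_add_mem_hypPlane (hu : lprod u u = 0) (hu0 : 0 < u 0) (hw : lprod w w = 1)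
    {c : ℝ} (hc : lprod u w = -c) (hc0 : 0 < c) : c⁻¹ • u + w ∈ hypPlane w := by
  have hqq : lprod (c⁻¹ • u + w) (c⁻¹ • u + w) = -1 := by
    simp only [lprod_add_left, lprod_add_right, lprod_smul_left, lprod_smul_right,
      lprod_comm w u, hu, hw, hc]
    field_simp; ring
  refine ⟨⟨hqq, apply_zero_pos_of_lprod_neg hu.le hu0 (by linarith) ?_⟩, ?_⟩
  · simp [hu, hc, hc0]
  · simp only [lprod_add_left, lprod_smul_left, hw, hc]; field_simp; ring

lemma isLeast_hypDist_horosphere_hypPlane (hu : lprod u u = 0) (hu0 : 0 < u 0)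
    (hw : lprod w w = 1) {c : ℝ} (hc : lprod u w = -c) (hc1 : 1 < c) :
    IsLeast {d | ∃ p ∈ horosphere u, ∃ q ∈ hypPlane w, d = hypDist p q} (Real.log c) := by
  have hc0 : 0 < c := by linarith
  have hlog : Real.log c = Real.arcosh ((c + c⁻¹) / 2) := by
    rw [← Real.cosh_log hc0, Real.arcosh_cosh (Real.log_nonneg hc1.le)]
  have hpq : lprod (horoProj u (c⁻¹ • w)) (c⁻¹ • u + w) = -((c + c⁻¹) / 2) := by
    simp only [horoProj, lprod_add_left, lprod_add_right, lprod_smul_left, lprod_smul_right,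
      lprod_comm w u, hu, hw, hc]
    field_simp
    ring
  refine ⟨⟨_, horoProj_inv_smul_mem_horosphere hu hu0 hc hc0.ne', _,
    inv_smul_add_mem_hypPlane hu hu0 hw hc hc0, by rw [hlog, hypDist, hpq, neg_neg]; rfl⟩, ?_⟩
  rintro _ ⟨p, hp, q, hq, rfl⟩
  have hle := le_neg_lprod_of_mem_horosphere_of_mem_hypPlane hu hw hc hc1 hp hq
  have hK : 0 < (c + c⁻¹) / 2 := by positivity
  rw [hlog, hypDist]
  exact (Real.arcosh_le_arcosh hK (hK.trans_le hle)).2 hle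

end Horosphere

theorem exp_dist_horosphere_plane_general (u w : Fin 4 → ℝ)
    (hu : lprod u u = 0) (hu0 : 0 < u 0) (hw : lprod w w = 1)
    (O H : Set (Fin 4 → ℝ))
    (hO : O = {v ∈ Hyp3 | lprod v u = -1})
    (hH : H = {v ∈ Hyp3 | lprod v w = 0})
    (hside : ∀ v ∈ O, lprod v w < 0) :
    Real.exp (setHypDist O H) = -(lprod u w) := by
  subst hO hH
  change Real.exp (setHypDist (horosphere u) (hypPlane w)) = _
  have hc1 : 1 < -lprod u w := one_lt_neg_lprod_of_forall_mem_horosphere hu hu0 hw hside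
  rw [setHypDist, (isLeast_hypDist_horosphere_hypPlane hu hu0 hw (neg_neg _).symm hc1).csInf_eq,
    Real.exp_log (by linarith)]

/-- Let `O` be the horosphere dual to `u ∈ L³₊` and `H` a totally geodesic plane disjoint
from `O`, with `w` the unit space-like dual vector of the half-space bounded by `H`
containing `O`.  Then `exp d(O, H) = −⟨u, w⟩`. -/
theorem exp_dist_horosphere_plane (u w : Fin 4 → ℝ)
    (hu : lprod u u = 0) (hu0 : 0 < u 0) (hw : lprod w w = 1)
    (O H : Set (Fin 4 → ℝ))
    (hO : O = {v ∈ Hyp3 | lprod v u = -1})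
    (hH : H = {v ∈ Hyp3 | lprod v w = 0})
    (hdisj : O ∩ H = ∅)
    (hside : ∀ v ∈ O, lprod v w < 0) :
    Real.exp (setHypDist O H) = -(lprod u w) :=
  exp_dist_horosphere_plane_general u w hu hu0 hw O H hO hH hside
end

section
/- For angles θ₁, θ₂, θ₃ ∈ [0, π) with θ₁ + θ₂ + θ₃ < π, the quantity d^θ = 2cos θ₁ cos θ₂ cos θ₃ + cos²θ₁ + cos²θ₂ + cos²θ₃ − 1 is strictly positive. -/
open Real

/-- For angles `θ₁, θ₂, θ₃ ∈ [0, π)` with `θ₁ + θ₂ + θ₃ < π`, the quantity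
`d^θ = 2cos θ₁ cos θ₂ cos θ₃ + cos²θ₁ + cos²θ₂ + cos²θ₃ − 1` is strictly positive. -/
theorem dtheta_pos (θ₁ θ₂ θ₃ : ℝ)
    (h₁ : 0 ≤ θ₁) (h₁' : θ₁ < π) (h₂ : 0 ≤ θ₂) (h₂' : θ₂ < π)
    (h₃ : 0 ≤ θ₃) (h₃' : θ₃ < π) (hsum : θ₁ + θ₂ + θ₃ < π) :
    0 < 2 * cos θ₁ * cos θ₂ * cos θ₃ + cos θ₁ ^ 2 + cos θ₂ ^ 2 + cos θ₃ ^ 2 - 1 := by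
  have key : 2 * cos θ₁ * cos θ₂ * cos θ₃ + cos θ₁ ^ 2 + cos θ₂ ^ 2 + cos θ₃ ^ 2 - 1
      = (cos θ₃ + cos (θ₁ + θ₂)) * (cos θ₃ + cos (θ₁ - θ₂)) := by
    rw [cos_add, cos_sub]
    nlinarith [sin_sq_add_cos_sq θ₁, sin_sq_add_cos_sq θ₂]
  rw [key]
  have hf1 : 0 < cos θ₃ + cos (θ₁ + θ₂) := by
    have : cos (π - θ₃) < cos (θ₁ + θ₂) := by
      apply strictAntiOn_cos ⟨by linarith, by linarith⟩ ⟨by linarith, by linarith⟩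
      linarith
    rw [cos_pi_sub] at this
    linarith
  have hf2 : 0 < cos θ₃ + cos (θ₁ - θ₂) := by
    rcases le_total θ₂ θ₁ with h | h
    · have : cos (π - θ₃) < cos (θ₁ - θ₂) := by
        apply strictAntiOn_cos ⟨by linarith, by linarith⟩ ⟨by linarith, by linarith⟩
        linarith
      rw [cos_pi_sub] at this
      linarith
    · have hcc : cos (θ₁ - θ₂) = cos (θ₂ - θ₁) := by
        rw [← cos_neg]; ring_nf
      rw [hcc]
      have : cos (π - θ₃) < cos (θ₂ - θ₁) := by
        apply strictAntiOn_cos ⟨by linarith, by linarith⟩ ⟨by linarith, by linarith⟩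
        linarith
      rw [cos_pi_sub] at this
      linarith
  positivity
end

section
/- Let v = (1,0,0,0) ∈ M^{3,1} and q̂ = (b, b, 0, 0) with b > 1. Let E(v) = {x : x₀ = a} for some a > 0, a parabolic support hyperplane F = {x : ⟨x, q̂⟩ = −t}, and consider a 2-face W lying in E(v) ∩ F. The angle formed at W between a 3-face lying in E(v) and the cone from q̂ over a face in F is strictly convex (the component of the complement of the two half-hyperplanes not containing 0 is convex and their union is not a hyperplane) if and only if a < b. -/
/-- Two subsets `H₁, H₂` (half-hyperplanes with common boundary) form a convex angle
if every connected component of the complement of `H₁ ∪ H₂` not containing `0` is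
convex. -/
def ConvexAngleAt (H₁ H₂ : Set (Fin 4 → ℝ)) : Prop :=
  ∀ x ∈ (H₁ ∪ H₂)ᶜ, (0 : Fin 4 → ℝ) ∉ connectedComponentIn (H₁ ∪ H₂)ᶜ x →
    Convex ℝ (connectedComponentIn (H₁ ∪ H₂)ᶜ x)

/-- A subset of `M^{3,1}` is an (affine) hyperplane if it is the level set of a nonzero
linear functional. -/
def IsHyperplaneSet (S : Set (Fin 4 → ℝ)) : Prop :=
  ∃ (w : Fin 4 → ℝ) (c : ℝ), w ≠ 0 ∧ S = {x | lprod w x = c}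

/-!
In the `(x₀, x₁)`-plane through the apex `P`, the faces `H₁` and `H₂` are two rays. If `a = b` they
are opposite and `H₁ ∪ H₂` is the hyperplane `x₀ = a`. Otherwise `H₁ ∪ H₂` is the boundary of the
quadrant `{φ ≥ 0, ψ ≥ 0}` of two affine functions, and its complement has exactly two components:
the open quadrant, which is convex, and the reflex region `{φ < 0 ∨ ψ < 0}`, a union of two
half-spaces meeting each other, hence connected, but not convex. Evaluating at `0` shows that the
origin lies in the reflex region exactly when `a < b`, so the component avoiding `0` is convex iff
`a < b`.
-/

open Set

lemma connectedComponentIn_union_eq_left {X : Type*} [TopologicalSpace X] {U V : Set X}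
    (hUV : Disjoint U V) (hU : IsOpen U) (hV : IsOpen V) (hUc : IsPreconnected U) {x : X}
    (hx : x ∈ U) : connectedComponentIn (U ∪ V) x = U :=
  subset_antisymm
    (isPreconnected_connectedComponentIn.subset_left_of_subset_union hU hV hUV
      (connectedComponentIn_subset _ _) ⟨x, mem_connectedComponentIn (Or.inl hx), hx⟩)
    (hUc.subset_connectedComponentIn hx subset_union_left)

section Quadrant

variable {E : Type*} [AddCommGroup E] [Module ℝ E] (f g : E →ᵃ[ℝ] ℝ)

def quadrantBoundary : Set E := {x | 0 ≤ f x ∧ 0 ≤ g x ∧ (f x = 0 ∨ g x = 0)}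

def openQuadrant : Set E := {x | 0 < f x ∧ 0 < g x}

def reflexRegion : Set E := {x | f x < 0 ∨ g x < 0}

lemma compl_quadrantBoundary :
    (quadrantBoundary f g)ᶜ = openQuadrant f g ∪ reflexRegion f g := by
  ext x
  simp only [quadrantBoundary, openQuadrant, reflexRegion, mem_compl_iff, mem_union,
    mem_ofPred_eq]
  grind

lemma disjoint_openQuadrant_reflexRegion : Disjoint (openQuadrant f g) (reflexRegion f g) := by
  rw [Set.disjoint_left]
  rintro x ⟨hf, hg⟩ (h | h) <;> linarith

lemma convex_openQuadrant : Convex ℝ (openQuadrant f g) :=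
  ((convex_Ioi 0).affine_preimage f).inter ((convex_Ioi 0).affine_preimage g)

lemma not_convex_quadrantBoundary {x y : E} (hfx : f x = 0) (hgx : 0 < g x) (hgy : g y = 0)
    (hfy : 0 < f y) : ¬ Convex ℝ (quadrantBoundary f g) := by
  intro h
  have hsum : (1 / 2 : ℝ) + 1 / 2 = 1 := by norm_num
  have hmid := h ⟨hfx.ge, hgx.le, Or.inl hfx⟩ ⟨hfy.le, hgy.ge, Or.inr hgy⟩
    (by norm_num) (by norm_num) hsum
  obtain ⟨-, -, h0 | h0⟩ := hmid <;>
    simp only [Convex.combo_affine_apply hsum, smul_eq_mul] at h0 <;> linarith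

lemma not_convex_reflexRegion {x y : E} (hfx : f x < 0) (hgy : g y < 0) (hf : 0 ≤ f x + f y)
    (hg : 0 ≤ g x + g y) : ¬ Convex ℝ (reflexRegion f g) := by
  intro h
  have hsum : (1 / 2 : ℝ) + 1 / 2 = 1 := by norm_num
  have hmid := h (Or.inl hfx) (Or.inr hgy) (by norm_num) (by norm_num) hsum
  obtain h0 | h0 := hmid <;>
    simp only [Convex.combo_affine_apply hsum, smul_eq_mul] at h0 <;> linarith

variable [TopologicalSpace E]

lemma isOpen_openQuadrant (hf : Continuous f) (hg : Continuous g) :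
    IsOpen (openQuadrant f g) :=
  (isOpen_lt continuous_const hf).inter (isOpen_lt continuous_const hg)

lemma isOpen_reflexRegion (hf : Continuous f) (hg : Continuous g) :
    IsOpen (reflexRegion f g) :=
  (isOpen_lt hf continuous_const).union (isOpen_lt hg continuous_const)

lemma isPreconnected_reflexRegion [IsTopologicalAddGroup E] [ContinuousSMul ℝ E] {p : E}
    (hfp : f p < 0) (hgp : g p < 0) : IsPreconnected (reflexRegion f g) :=
  IsPreconnected.union p hfp hgp ((convex_Iio 0).affine_preimage f).isPreconnected
    ((convex_Iio 0).affine_preimage g).isPreconnected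

end Quadrant

section FiniteDimensional

variable {E : Type*} [NormedAddCommGroup E] [NormedSpace ℝ E] [FiniteDimensional ℝ E]
  {f g : E →ᵃ[ℝ] ℝ}

lemma connectedComponentIn_compl_quadrantBoundary_of_mem_openQuadrant {x : E}
    (hx : x ∈ openQuadrant f g) :
    connectedComponentIn (quadrantBoundary f g)ᶜ x = openQuadrant f g := by
  rw [compl_quadrantBoundary]
  exact connectedComponentIn_union_eq_left (disjoint_openQuadrant_reflexRegion f g)
    (isOpen_openQuadrant f g f.continuous_of_finiteDimensional g.continuous_of_finiteDimensional)
    (isOpen_reflexRegion f g f.continuous_of_finiteDimensional g.continuous_of_finiteDimensional)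
    (convex_openQuadrant f g).isPreconnected hx

lemma connectedComponentIn_compl_quadrantBoundary_of_mem_reflexRegion {p x : E}
    (hfp : f p < 0) (hgp : g p < 0) (hx : x ∈ reflexRegion f g) :
    connectedComponentIn (quadrantBoundary f g)ᶜ x = reflexRegion f g := by
  rw [compl_quadrantBoundary, union_comm]
  exact connectedComponentIn_union_eq_left (disjoint_openQuadrant_reflexRegion f g).symm
    (isOpen_reflexRegion f g f.continuous_of_finiteDimensional g.continuous_of_finiteDimensional)
    (isOpen_openQuadrant f g f.continuous_of_finiteDimensional g.continuous_of_finiteDimensional)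
    (isPreconnected_reflexRegion f g hfp hgp) hx

end FiniteDimensional

section Angle

variable {H₁ H₂ : Set (Fin 4 → ℝ)} {f g : (Fin 4 → ℝ) →ᵃ[ℝ] ℝ}

lemma convexAngleAt_of_union_eq (hU : H₁ ∪ H₂ = quadrantBoundary f g) (hf0 : f 0 < 0)
    (hg0 : g 0 < 0) : ConvexAngleAt H₁ H₂ := by
  intro x hx h0
  rw [hU, compl_quadrantBoundary] at hx
  rw [hU] at h0 ⊢
  rcases hx with hx | hx
  · rw [connectedComponentIn_compl_quadrantBoundary_of_mem_openQuadrant hx]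
    exact convex_openQuadrant f g
  · rw [connectedComponentIn_compl_quadrantBoundary_of_mem_reflexRegion hf0 hg0 hx] at h0
    exact absurd (Or.inl hf0) h0

lemma not_convexAngleAt_of_union_eq (hU : H₁ ∪ H₂ = quadrantBoundary f g)
    (h0 : 0 ∈ openQuadrant f g) {p : Fin 4 → ℝ} (hfp : f p < 0) (hgp : g p < 0)
    (hR : ¬ Convex ℝ (reflexRegion f g)) : ¬ ConvexAngleAt H₁ H₂ := by
  intro h
  have hp : p ∈ reflexRegion f g := Or.inl hfp
  have hcc := connectedComponentIn_compl_quadrantBoundary_of_mem_reflexRegion hfp hgp hp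
  rw [ConvexAngleAt, hU] at h
  rw [← hcc] at hR
  refine hR (h p ?_ ?_)
  · rw [compl_quadrantBoundary]
    exact Or.inr hp
  · rw [hcc]
    exact (disjoint_openQuadrant_reflexRegion f g).notMem_of_mem_left h0

end Angle

lemma IsHyperplaneSet.convex {S : Set (Fin 4 → ℝ)} (h : IsHyperplaneSet S) : Convex ℝ S := by
  obtain ⟨w, c, -, rfl⟩ := h
  refine convex_hyperplane ⟨fun x y => ?_, fun r x => ?_⟩ c <;>
    simp only [lprod, Pi.add_apply, Pi.smul_apply, smul_eq_mul] <;> ring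

/-- The trace of `H₁ ∪ H₂` in the `(x₀, x₁)`-plane, in coordinates `u = x₀ - a`,
`w = x₁ - (a - t / b)` centred at the apex of the angle, with `d = b - a` and `k = t / b`. -/
def OnAngle (d k u w : ℝ) : Prop :=
  (u = 0 ∧ w ≤ 0) ∨ ∃ s, 0 ≤ s ∧ u = s * d ∧ w = s * (d + k)

lemma onAngle_zero_iff {k u w : ℝ} (hk : 0 < k) : OnAngle 0 k u w ↔ u = 0 := by
  refine ⟨?_, fun hu => ?_⟩
  · rintro (⟨hu, -⟩ | ⟨s, -, hu, -⟩) <;> simp [hu]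
  · rcases le_or_gt w 0 with hw | hw
    · exact Or.inl ⟨hu, hw⟩
    · exact Or.inr ⟨w / k, by positivity, by simp [hu], by field_simp; ring⟩

lemma onAngle_iff {d k u w : ℝ} (hd : d ≠ 0) :
    OnAngle d k u w ↔ 0 ≤ d * u ∧ 0 ≤ d * ((d + k) * u - d * w) ∧
      (d * u = 0 ∨ d * ((d + k) * u - d * w) = 0) := by
  have hd2 : 0 < d * d := mul_self_pos.2 hd
  constructor
  · rintro (⟨rfl, hw⟩ | ⟨s, hs, rfl, rfl⟩)
    · refine ⟨by simp, by nlinarith, by simp⟩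
    · refine ⟨by nlinarith, le_of_eq (by ring), Or.inr (by ring)⟩
  · rintro ⟨h1, h2, hu | hc⟩
    · have hu : u = 0 := (mul_eq_zero.1 hu).resolve_left hd
      subst hu
      exact Or.inl ⟨rfl, by nlinarith⟩
    · have hc : (d + k) * u = d * w := by
        linear_combination (mul_eq_zero.1 hc).resolve_left hd
      refine Or.inr ⟨d * u / (d * d), div_nonneg h1 hd2.le, by field_simp, ?_⟩
      field_simp
      linear_combination -hc

/-- `ellipticSide` and `coneSide` vanish on the hyperplanes spanned by `H₁` and `H₂`; the factor
`d = b - a` orients them so that `H₁ ∪ H₂` bounds `{ellipticSide ≥ 0, coneSide ≥ 0}` for either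
sign of `b - a`. -/
def ellipticSide (a d : ℝ) : (Fin 4 → ℝ) →ᵃ[ℝ] ℝ where
  toFun x := d * (x 0 - a)
  linear := d • LinearMap.proj 0
  map_vadd' x v := by
    simp only [Pi.vadd_apply', vadd_eq_add, LinearMap.smul_apply, LinearMap.coe_proj,
      Function.eval, smul_eq_mul]
    ring

def coneSide (a d k : ℝ) : (Fin 4 → ℝ) →ᵃ[ℝ] ℝ where
  toFun x := d * ((d + k) * (x 0 - a) - d * (x 1 - (a - k)))
  linear := (d * (d + k)) • LinearMap.proj 0 - (d * d) • LinearMap.proj 1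
  map_vadd' x v := by
    simp only [Pi.vadd_apply', vadd_eq_add, LinearMap.sub_apply, LinearMap.smul_apply,
      LinearMap.coe_proj, Function.eval, smul_eq_mul]
    ring

lemma ellipticSide_apply (a d : ℝ) (x : Fin 4 → ℝ) : ellipticSide a d x = d * (x 0 - a) := rfl

lemma coneSide_apply (a d k : ℝ) (x : Fin 4 → ℝ) :
    coneSide a d k x = d * ((d + k) * (x 0 - a) - d * (x 1 - (a - k))) := rfl

lemma ellipticSide_apply_zero (a d : ℝ) : ellipticSide a d 0 = -(d * a) := by
  simp [ellipticSide_apply]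

lemma coneSide_apply_zero (a d k : ℝ) : coneSide a d k 0 = -(d * k * (a + d)) := by
  simp only [coneSide_apply, Pi.zero_apply]
  ring

lemma setOf_onAngle_eq_quadrantBoundary {a d k : ℝ} (hd : d ≠ 0) :
    {x : Fin 4 → ℝ | OnAngle d k (x 0 - a) (x 1 - (a - k))} =
      quadrantBoundary (ellipticSide a d) (coneSide a d k) := by
  ext x
  exact onAngle_iff hd

lemma isHyperplaneSet_setOf_onAngle_zero {a k w₁ : ℝ} (hk : 0 < k) :
    IsHyperplaneSet {x : Fin 4 → ℝ | OnAngle 0 k (x 0 - a) (x 1 - w₁)} := by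
  refine ⟨![-1, 0, 0, 0], a, by simp, ?_⟩
  ext x
  simp [onAngle_zero_iff hk, lprod, sub_eq_zero]

lemma not_convex_quadrantBoundary_sides {a d k : ℝ} (hd : d ≠ 0) :
    ¬ Convex ℝ (quadrantBoundary (ellipticSide a d) (coneSide a d k)) := by
  have hd2 : 0 < d * d := mul_self_pos.2 hd
  refine not_convex_quadrantBoundary _ _ (x := ![a, a - k - 1, 0, 0]) (y := ![a + d, a + d, 0, 0])
    ?_ ?_ ?_ ?_ <;>
    simp only [ellipticSide_apply, coneSide_apply, Matrix.cons_val_zero, Matrix.cons_val_one]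
  · ring
  · nlinarith
  · ring
  · nlinarith

lemma not_convex_reflexRegion_sides {a d k : ℝ} (hd : d < 0) :
    ¬ Convex ℝ (reflexRegion (ellipticSide a d) (coneSide a d k)) := by
  refine not_convex_reflexRegion _ _ (x := ![a - d, a - d - 2 * k - 1, 0, 0])
    (y := ![a + d, a + d + 1, 0, 0]) ?_ ?_ ?_ ?_ <;>
    simp only [ellipticSide_apply, coneSide_apply, Matrix.cons_val_zero, Matrix.cons_val_one] <;>
    nlinarith

lemma exists_ellipticSide_neg_coneSide_neg {a d k : ℝ} (hd : d < 0) :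
    ∃ p, ellipticSide a d p < 0 ∧ coneSide a d k p < 0 := by
  refine ⟨![a - d, a - d - 2 * k + 1, 0, 0], ?_, ?_⟩ <;>
    simp only [ellipticSide_apply, coneSide_apply, Matrix.cons_val_zero, Matrix.cons_val_one] <;>
    nlinarith

lemma union_eq_setOf_onAngle {a b t : ℝ} (hb : b ≠ 0) {q c : Fin 4 → ℝ}
    {P H₁ H₂ : Set (Fin 4 → ℝ)} (hq : q = ![b, b, 0, 0]) (hc : c = ![a, a - t / b, 0, 0])
    (hP : P = {x | x 0 = a} ∩ {x | lprod x q = -t})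
    (hH₁ : H₁ = {x | x 0 = a ∧ x 1 ≤ a - t / b})
    (hH₂ : H₂ = {y | ∃ x ∈ P, ∃ s : ℝ, 0 ≤ s ∧ y = x + s • (q - c)}) :
    H₁ ∪ H₂ = {x | OnAngle (b - a) (t / b) (x 0 - a) (x 1 - (a - t / b))} := by
  have hP' : ∀ x, x ∈ P ↔ x 0 = a ∧ x 1 = a - t / b := by
    intro x
    simp only [hP, hq, lprod, mem_inter_iff, mem_ofPred_eq]
    refine and_congr_right fun hx0 => ?_
    simp only [hx0, Matrix.cons_val_zero, Matrix.cons_val_one, Matrix.cons_val_two,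
      Matrix.cons_val_three, Matrix.tail_cons, Matrix.head_cons, mul_zero, add_zero]
    constructor <;> intro h
    · field_simp
      linarith
    · rw [h]
      field_simp
      ring
  ext y
  simp only [hH₁, hH₂, OnAngle, mem_union, mem_ofPred_eq, sub_eq_zero, sub_nonpos]
  refine or_congr Iff.rfl ⟨?_, ?_⟩
  · rintro ⟨x, hx, s, hs, rfl⟩
    obtain ⟨hx0, hx1⟩ := (hP' x).1 hx
    refine ⟨s, hs, ?_, ?_⟩ <;>
      simp only [hq, hc, hx0, hx1, Pi.add_apply, Pi.smul_apply, Pi.sub_apply, smul_eq_mul,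
        Matrix.cons_val_zero, Matrix.cons_val_one] <;> ring
  · rintro ⟨s, hs, hy0, hy1⟩
    refine ⟨y - s • (q - c), (hP' _).2 ⟨?_, ?_⟩, s, hs, by abel⟩ <;>
      simp only [hq, hc, Pi.sub_apply, Pi.smul_apply, smul_eq_mul, Matrix.cons_val_zero,
        Matrix.cons_val_one] <;> linarith

/-- Let `v = (1,0,0,0)`, `q̂ = (b,b,0,0)` with `b > 1`, let `E(v) = {x₀ = a}` with `a > 0`
be the elliptic support hyperplane and `F = {⟨x,q̂⟩ = −t}` (with `t > 0`) a parabolic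
support hyperplane, meeting in the 2-plane `P = E ∩ F` containing the 2-face `W`.
The angle formed at `W` between the 3-face lying in `E(v)` (the half-hyperplane `H₁`
of `E` bounded by `P` on the elliptic side) and the cone `H₂` from `q̂` over `P` is
strictly convex if and only if `a < b`. -/
theorem elliptic_parabolic_convexity (a b t : ℝ)
    (ha : 0 < a) (hb : 1 < b) (ht : 0 < t)
    (q c : Fin 4 → ℝ)
    (hq : q = ![b, b, 0, 0]) (hc : c = ![a, a - t / b, 0, 0])
    (E F P H₁ H₂ : Set (Fin 4 → ℝ))
    (hE : E = {x | x 0 = a}) (hF : F = {x | lprod x q = -t})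
    (hP : P = E ∩ F)
    (hH₁ : H₁ = {x | x 0 = a ∧ x 1 ≤ a - t / b})
    (hH₂ : H₂ = {y | ∃ x ∈ P, ∃ s : ℝ, 0 ≤ s ∧ y = x + s • (q - c)}) :
    (ConvexAngleAt H₁ H₂ ∧ ¬ IsHyperplaneSet (H₁ ∪ H₂)) ↔ a < b := by
  have hb0 : 0 < b := by linarith
  have hk : 0 < t / b := by positivity
  have hU := union_eq_setOf_onAngle hb0.ne' hq hc (hE ▸ hF ▸ hP) hH₁ hH₂
  have hf0 := ellipticSide_apply_zero a (b - a)
  have hg0 : coneSide a (b - a) (t / b) 0 = -((b - a) * t) := by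
    rw [coneSide_apply_zero]
    field_simp
    ring
  rcases lt_trichotomy a b with hab | rfl | hab
  · have hQ := hU.trans (setOf_onAngle_eq_quadrantBoundary (sub_pos.2 hab).ne')
    refine iff_of_true ⟨convexAngleAt_of_union_eq hQ ?_ ?_, fun h => ?_⟩ hab
    · nlinarith
    · nlinarith
    · exact not_convex_quadrantBoundary_sides (sub_pos.2 hab).ne' (hQ ▸ h.convex)
  · rw [sub_self] at hU
    exact iff_of_false (fun h => h.2 (hU ▸ isHyperplaneSet_setOf_onAngle_zero hk)) (lt_irrefl a)
  · have hd : b - a < 0 := sub_neg.2 hab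
    have hQ := hU.trans (setOf_onAngle_eq_quadrantBoundary hd.ne)
    obtain ⟨p, hfp, hgp⟩ := exists_ellipticSide_neg_coneSide_neg (a := a) (k := t / b) hd
    refine iff_of_false (fun h => not_convexAngleAt_of_union_eq hQ ⟨?_, ?_⟩ hfp hgp
      (not_convex_reflexRegion_sides hd) h.1) hab.not_gt
    · nlinarith
    · nlinarith
end

section
/- Let x, y, z, w ∈ (−1, 1] satisfy w = (x + zy)·√((1−x²)/(1−z²)) − xy with z < 1, and suppose x + y > 1 − z ≥ 0 and d := x² + y² + z² + 2xyz − 1 > 0. Then (1−z)·√((1−x²)/(1−z²)) < x + y; equivalently, (1−z)√(d·(1−x²)/(1−z²)) − (x+y)√d < 0. -/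
/-- Let `x, y, z, w ∈ (−1, 1]` satisfy `w = (x + zy)·√((1−x²)/(1−z²)) − xy` with `z < 1`,
and suppose `x + y > 1 − z ≥ 0` and `d := x² + y² + z² + 2xyz − 1 > 0`.  Then
`(1−z)·√((1−x²)/(1−z²)) < x + y`; equivalently
`(1−z)√(d·(1−x²)/(1−z²)) − (x+y)√d < 0`. -/
theorem tilt_negative_inequality (x y z w d : ℝ)
    (hx : -1 < x) (hx' : x ≤ 1) (hy : -1 < y) (hy' : y ≤ 1)
    (hz : -1 < z) (hz' : z ≤ 1) (hw : -1 < w) (hw' : w ≤ 1)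
    (hz1 : z < 1)
    (hweq : w = (x + z * y) * Real.sqrt ((1 - x ^ 2) / (1 - z ^ 2)) - x * y)
    (hxy : 1 - z < x + y) (hz0 : 0 ≤ 1 - z)
    (hd : d = x ^ 2 + y ^ 2 + z ^ 2 + 2 * x * y * z - 1) (hdpos : 0 < d) :
    (1 - z) * Real.sqrt ((1 - x ^ 2) / (1 - z ^ 2)) < x + y ∧
    (1 - z) * Real.sqrt (d * (1 - x ^ 2) / (1 - z ^ 2)) - (x + y) * Real.sqrt d < 0 := by
  have hz2 : (0:ℝ) < 1 - z ^ 2 := by nlinarith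
  have h1z : (0:ℝ) < 1 - z := by linarith
  have hzp : (0:ℝ) < 1 + z := by nlinarith
  have hx2 : (0:ℝ) ≤ 1 - x ^ 2 := by nlinarith
  have hxy0 : 0 < x + y := lt_of_le_of_lt hz0 hxy
  have hs := Real.sq_sqrt (div_nonneg hx2 hz2.le)
  set s := Real.sqrt ((1 - x ^ 2) / (1 - z ^ 2)) with hsdef
  have hs0 : 0 ≤ s := Real.sqrt_nonneg _
  have hss : s ^ 2 * (1 - z ^ 2) = 1 - x ^ 2 := by
    rw [hs]; field_simp
  have hE : (1 - z) * (1 - x ^ 2) < (x + y) ^ 2 * (1 + z) := by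
    have hid : (x + y) ^ 2 * (1 + z) - (1 - z) * (1 - x ^ 2)
        = d + ((x + y) ^ 2 - (1 - z) ^ 2) + (1 - z) * (1 - y ^ 2) := by
      rw [hd]; ring
    have h1 : 0 < (x + y) ^ 2 - (1 - z) ^ 2 := by
      have h := mul_pos (sub_pos.mpr hxy) (show (0:ℝ) < (x + y) + (1 - z) by linarith)
      have e : (x + y) ^ 2 - (1 - z) ^ 2 = (x + y - (1 - z)) * ((x + y) + (1 - z)) := by
        ring
      rw [e]; exact h
    have h2 : 0 ≤ (1 - z) * (1 - y ^ 2) := by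
      have h := mul_nonneg hz0 (mul_nonneg (sub_nonneg.mpr hy') (show (0:ℝ) ≤ 1 + y by linarith))
      have e : (1 - z) * (1 - y ^ 2) = (1 - z) * ((1 - y) * (1 + y)) := by ring
      rw [e]; exact h
    linarith
  have hkey : (1 - z) * s < x + y := by
    have hu2 : ((1 - z) * s) ^ 2 * (1 + z) = (1 - z) * (1 - x ^ 2) := by
      have : ((1 - z) * s) ^ 2 * (1 + z) = (1 - z) * (s ^ 2 * (1 - z ^ 2)) := by ring
      rw [this, hss]
    have hlt : ((1 - z) * s) ^ 2 * (1 + z) < (x + y) ^ 2 * (1 + z) := by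
      rw [hu2]; exact hE
    have hsq : ((1 - z) * s) ^ 2 < (x + y) ^ 2 := by
      exact lt_of_mul_lt_mul_right hlt hzp.le
    exact lt_of_pow_lt_pow_left₀ 2 hxy0.le hsq
  refine ⟨hkey, ?_⟩
  have hsd : Real.sqrt (d * (1 - x ^ 2) / (1 - z ^ 2)) = Real.sqrt d * s := by
    rw [hsdef, ← Real.sqrt_mul hdpos.le, mul_div_assoc]
  rw [hsd]
  have hdp : 0 < Real.sqrt d := Real.sqrt_pos.mpr hdpos
  nlinarith [mul_pos hdp (sub_pos.mpr hkey)]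
end
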